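/- arXiv:2306.13722 — 3 statements merged into one kernel-verified Lean document; each statement's English description precedes it below -/
import Mathlib

section
/- Let ζ ∈ T, u, v ∈ C, and set z_1 = ζ e^{u/n}, z_2 = ζ e^{v/n}. Then (1 - conj(z_2)^n z_1^n)/(n(1 - conj(z_2) z_1)) converges to (e^{u + conj(v)} - 1)/(u + conj(v)) as n → ∞, uniformly for (u,v) in compact subsets of C × C (with the convention that (e^w - 1)/w = 1 at w = 0). -/
/-!
Put `w = u + conj v` and `φ = dslope exp 0`, so that `φ w = (e^w - 1)/w` and `φ 0 = 1`. Since
`|ζ| = 1`, `conj z₂ * z₁ = e^{w/n}`, and the kernel ratio is `(1 - e^w)/(n(1 - e^{w/n}))`, which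
equals `φ w / φ (w/n)` as soon as `φ (w/n) ≠ 0`. The map `(t, w) ↦ φ w / φ (t w)` is continuous,
hence uniformly continuous, on `U × S` for a compact neighbourhood `U` of `0` on which the
denominator does not vanish; so it tends to `φ w / φ 0 = φ w` uniformly on `S` as `t = 1/n → 0`.
-/

open Filter Topology Complex

section

variable {𝕜 : Type*} [NormedField 𝕜] {φ : 𝕜 → 𝕜} {S : Set 𝕜}

lemma eventually_forall_comp_mul_ne_zero (hφ : Continuous φ) (h0 : φ 0 ≠ 0) (hS : IsCompact S) :
    ∀ᶠ t in 𝓝 0, ∀ w ∈ S, φ (t * w) ≠ 0 :=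
  hS.eventually_forall_of_forall_eventually fun _ _ =>
    (hφ.comp continuous_mul).continuousAt.eventually_ne (by simpa using h0)

lemma tendstoUniformlyOn_div_comp_mul [LocallyCompactSpace 𝕜] (hφ : Continuous φ) (h0 : φ 0 ≠ 0)
    (hS : IsCompact S) :
    TendstoUniformlyOn (fun t w => φ w / φ (t * w)) (fun w => φ w / φ 0) (𝓝 0) S := by
  obtain ⟨U, hU, hU_ne, hUc⟩ := local_compact_nhds (eventually_forall_comp_mul_ne_zero hφ h0 hS)
  have hcont : ContinuousOn (↿fun t w => φ w / φ (t * w)) (U ×ˢ S) :=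
    (hφ.comp continuous_snd).continuousOn.div (hφ.comp continuous_mul).continuousOn
      fun p hp => hU_ne hp.1 p.2 hp.2
  simpa [nhdsWithin_eq_nhds.2 hU] using
    ((hUc.prod hS).uniformContinuousOn_of_continuous hcont).tendstoUniformlyOn (mem_of_mem_nhds hU)

end

lemma dslope_exp_zero (w : ℂ) : dslope exp 0 w = if w = 0 then 1 else (exp w - 1) / w := by
  split_ifs with h
  · simp [h, dslope_same]
  · rw [dslope_of_ne _ h, slope_def_field]
    simp

noncomputable def kernelRatio (n : ℕ) (w : ℂ) : ℂ :=
  if exp (w / n) = 1 then 1 else (1 - exp w) / (n * (1 - exp (w / n)))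

lemma kernelRatio_eq (n : ℕ) (w : ℂ) :
    kernelRatio n w =
      if exp (w / n) = 1 then 1 else (1 - exp (w / n) ^ n) / (n * (1 - exp (w / n))) := by
  rcases eq_or_ne n 0 with rfl | hn
  · simp [kernelRatio]
  · rw [kernelRatio, ← exp_nat_mul, mul_div_cancel₀ _ (Nat.cast_ne_zero.2 hn)]

lemma kernelRatio_eq_div_dslope {n : ℕ} (hn : n ≠ 0) {w : ℂ} (hw : dslope exp 0 (w / n) ≠ 0) :
    kernelRatio n w = dslope exp 0 w / dslope exp 0 (w / n) := by
  rcases eq_or_ne w 0 with rfl | hw0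
  · simp [kernelRatio, dslope_same]
  have exp_sub_one (z : ℂ) : exp z - 1 = z * dslope exp 0 z := by
    simpa using (sub_smul_dslope exp 0 z).symm
  have hexp : exp (w / n) ≠ 1 := by
    rw [← sub_ne_zero, exp_sub_one]
    exact mul_ne_zero (div_ne_zero hw0 (Nat.cast_ne_zero.2 hn)) hw
  rw [kernelRatio, if_neg hexp, ← neg_sub, exp_sub_one, ← neg_sub, exp_sub_one]
  field_simp

lemma tendstoUniformlyOn_kernelRatio {S : Set ℂ} (hS : IsCompact S) :
    TendstoUniformlyOn kernelRatio (dslope exp 0) atTop S := by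
  have hφ : Continuous (dslope exp 0) :=
    continuousOn_univ.1 <| (continuousOn_dslope univ_mem).2
      ⟨continuous_exp.continuousOn, differentiableAt_exp⟩
  have h0 : dslope exp 0 0 = 1 := by simp [dslope_same]
  have h0' : dslope exp 0 0 ≠ 0 := h0 ▸ one_ne_zero
  have hinv : Tendsto (fun n : ℕ => (n : ℂ)⁻¹) atTop (𝓝 0) := tendsto_inv_atTop_nhds_zero_nat
  have hquot : TendstoUniformlyOn (fun (n : ℕ) w => dslope exp 0 w / dslope exp 0 ((n : ℂ)⁻¹ * w))
      (dslope exp 0) atTop S := by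
    have hlim := tendstoUniformlyOn_div_comp_mul hφ h0' hS
    simp only [h0, div_one] at hlim
    exact fun u hu => hinv.eventually (hlim u hu)
  refine hquot.congr ?_
  filter_upwards [hinv.eventually (eventually_forall_comp_mul_ne_zero hφ h0' hS),
    eventually_ne_atTop 0] with n hne hn w hw
  simp only [inv_mul_eq_div] at hne ⊢
  exact (kernelRatio_eq_div_dslope hn (hne w hw)).symm

lemma starRingEnd_mul_exp_mul {ζ : ℂ} (hζ : ‖ζ‖ = 1) (u v : ℂ) (n : ℕ) :
    starRingEnd ℂ (ζ * exp (v / n)) * (ζ * exp (u / n)) = exp ((u + starRingEnd ℂ v) / n) := by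
  have hζζ : starRingEnd ℂ ζ * ζ = 1 := by
    rw [mul_comm, mul_conj, normSq_eq_norm_sq, hζ]
    simp
  rw [map_mul, ← exp_conj, mul_mul_mul_comm, hζζ, one_mul, ← exp_add, map_div₀, conj_natCast,
    add_div, add_comm]

/-- Universality for the Lebesgue measure: the kernel ratio
`k_{m,n}(ζe^{u/n}, ζe^{v/n})/k_{m,n}(ζ,ζ) = (1 - conj(z₂)ⁿ z₁ⁿ)/(n(1 - conj(z₂) z₁))`
converges to `(e^{u + conj v} - 1)/(u + conj v)` uniformly on compacts. -/
theorem lebesgue_kernel_ratio_tendstoUniformlyOn (ζ : ℂ) (hζ : ‖ζ‖ = 1)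
    (K : Set (ℂ × ℂ)) (hK : IsCompact K) :
    TendstoUniformlyOn
      (fun (n : ℕ) (p : ℂ × ℂ) =>
        if (starRingEnd ℂ) (ζ * Complex.exp (p.2 / n)) * (ζ * Complex.exp (p.1 / n)) = 1
        then 1
        else (1 - (starRingEnd ℂ) (ζ * Complex.exp (p.2 / n)) ^ n
                * (ζ * Complex.exp (p.1 / n)) ^ n)
          / ((n : ℂ) * (1 - (starRingEnd ℂ) (ζ * Complex.exp (p.2 / n))
                * (ζ * Complex.exp (p.1 / n)))))
      (fun p =>
        if p.1 + (starRingEnd ℂ) p.2 = 0 then 1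
        else (Complex.exp (p.1 + (starRingEnd ℂ) p.2) - 1) / (p.1 + (starRingEnd ℂ) p.2))
      atTop K := by
  let w : ℂ × ℂ → ℂ := fun p => p.1 + starRingEnd ℂ p.2
  have hlim := ((tendstoUniformlyOn_kernelRatio (hK.image (by fun_prop : Continuous w))).comp w).mono
    (Set.subset_preimage_image w K)
  simp only [← mul_pow, starRingEnd_mul_exp_mul hζ, ← kernelRatio_eq, ← dslope_exp_zero]
  exact hlim
end

section
/- Let p be a polynomial of degree n with no zeros in the closed unit disk, let λ ∈ D, and let ν = |p|^{-2} dm be the measure with density 1/|p(ξ)|² on T; assume ν(T) = 1. Then ∫_T |p(λ)/p(ξ) - 1|² P_λ(ξ) dm(ξ) = exp(K_ν(λ)) - 1, where K_ν(λ) = log(∫_T P_λ dν) - ∫_T log(|p(ξ)|^{-2}) P_λ(ξ) dm(ξ) is the entropy function of ν at λ. -/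
/-!
Write `A = p(λ)/p`, holomorphic on a neighbourhood of the closed disc with `A(λ) = 1`. Expanding
`|A - 1|² = |A|² - 2 Re A + 1` and applying the Poisson formula to `A` and to `1` gives
`∫ |A - 1|² P_λ dm = ∫ |A|² P_λ dm - 1 = |p(λ)|² ∫ P_λ dν - 1`.
Since `p` has no zeros on the closed disc, `log |p|` is harmonic there, and the Poisson formula
gives `∫ log |p|⁻² P_λ dm = -log |p(λ)|²`. Hence `K_ν(λ) = log (|p(λ)|² ∫ P_λ dν)`; the
argument of this logarithm is at least `1` because the left-hand side is nonnegative.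
-/

open MeasureTheory

/-- Normalized Lebesgue (arc-length) measure on the unit circle `T ⊂ ℂ`, `m(T) = 1`. -/
noncomputable def circleMeasure : Measure ℂ :=
  (ENNReal.ofReal (2 * Real.pi))⁻¹ •
    Measure.map (fun θ : ℝ => Complex.exp (θ * Complex.I))
      (volume.restrict (Set.Ioc 0 (2 * Real.pi)))

/-- Poisson kernel `P_z(ξ) = (1-|z|²)/|1 - conj(ξ) z|²`. -/
noncomputable def circlePoissonKernel (z ξ : ℂ) : ℝ :=
  (1 - ‖z‖ ^ 2) / ‖1 - (starRingEnd ℂ) ξ * z‖ ^ 2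

open Metric Real InnerProductSpace

section PoissonKernel

variable {c w : ℂ} {R : ℝ}

lemma continuousOn_poissonKernel_sphere (hw : w ∈ ball c R) :
    ContinuousOn (poissonKernel c w) (sphere c |R|) := by
  rw [poissonKernel_eq_re_herglotzRieszKernel]
  exact Complex.continuous_re.comp_continuousOn (continuousOn_herglotzRieszKernel_sphere hw)

lemma circleAverage_poissonKernel (hw : w ∈ ball c R) :
    circleAverage (poissonKernel c w) c R = 1 := by
  simpa [← Pi.one_def] using
    harmonicContOnCl_const.circleAverage_poissonKernel_smul (c := c) (f := fun _ ↦ (1 : ℝ)) hw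

variable {f : ℂ → ℂ}

lemma DiffContOnCl.continuousOn_sphere (hf : DiffContOnCl ℂ f (ball c R)) (hR : 0 < R) :
    ContinuousOn f (sphere c |R|) := by
  rw [abs_of_pos hR]
  exact hf.continuousOn_ball.mono sphere_subset_closedBall

lemma circleAverage_poissonKernel_mul_re (hf : DiffContOnCl ℂ f (ball c R)) (hw : w ∈ ball c R) :
    circleAverage (fun z ↦ poissonKernel c w z * (f z).re) c R = (f w).re := by
  have hint : CircleIntegrable (poissonKernel c w • f) c R :=
    ((continuousOn_poissonKernel_sphere hw).smul
      (hf.continuousOn_sphere (pos_of_mem_ball hw))).circleIntegrable'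
  rw [← hf.circleAverage_poissonKernel_smul hw, ← Complex.reCLM_apply,
    ← Complex.reCLM.circleAverage_comp_comm hint]
  congr 1
  ext z
  simp

lemma circleAverage_poissonKernel_mul_norm_sub_sq (hf : DiffContOnCl ℂ f (ball c R))
    (hw : w ∈ ball c R) :
    circleAverage (fun z ↦ poissonKernel c w z * ‖f z - f w‖ ^ 2) c R
      = circleAverage (fun z ↦ poissonKernel c w z * ‖f z‖ ^ 2) c R - ‖f w‖ ^ 2 := by
  set P := poissonKernel c w
  have hP := continuousOn_poissonKernel_sphere hw
  have hfc := hf.continuousOn_sphere (pos_of_mem_ball hw)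
  have hg : DiffContOnCl ℂ (fun z ↦ f z * (starRingEnd ℂ) (f w)) (ball c R) :=
    hf.smul_const _
  have hexpand : (fun z ↦ P z * ‖f z - f w‖ ^ 2) = fun z ↦
      P z * ‖f z‖ ^ 2 - (2 : ℝ) • (P z * (f z * (starRingEnd ℂ) (f w)).re)
        + ‖f w‖ ^ 2 • P z := by
    ext z
    simp only [smul_eq_mul, Complex.sq_norm, Complex.normSq_sub]
    ring
  rw [hexpand, circleAverage_fun_add, circleAverage_fun_sub, circleAverage_fun_smul,
    circleAverage_fun_smul, circleAverage_poissonKernel_mul_re hg hw,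
    circleAverage_poissonKernel hw]
  · rw [Complex.mul_conj, Complex.ofReal_re, Complex.normSq_eq_norm_sq]
    simp only [smul_eq_mul]
    ring
  all_goals
    apply ContinuousOn.circleIntegrable'
    fun_prop

lemma circleAverage_poissonKernel_mul_log_norm
    (hf : AnalyticOnNhd ℂ f (closedBall c R)) (hf₀ : ∀ z ∈ closedBall c R, f z ≠ 0)
    (hw : w ∈ ball c R) :
    circleAverage (fun z ↦ poissonKernel c w z * log ‖f z‖) c R = log ‖f w‖ :=
  HarmonicOnNhd.circleAverage_poissonKernel_smul
    (fun z hz ↦ (hf z hz).harmonicAt_log_norm (hf₀ z hz)) hw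

end PoissonKernel

lemma integral_withDensity_ofReal {α E : Type*} [MeasurableSpace α] {μ : Measure α}
    [NormedAddCommGroup E] [NormedSpace ℝ E] {f : α → ℝ} (hf : Measurable f) (hf₀ : 0 ≤ f)
    (g : α → E) :
    ∫ x, g x ∂μ.withDensity (fun x ↦ ENNReal.ofReal (f x)) = ∫ x, f x • g x ∂μ := by
  rw [integral_withDensity_eq_integral_toReal_smul hf.ennreal_ofReal
    (ae_of_all _ fun _ ↦ ENNReal.ofReal_lt_top)]
  simp_rw [ENNReal.toReal_ofReal (hf₀ _)]

section UnitCircle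

lemma circlePoissonKernel_eq_poissonKernel (z : ℂ) {ξ : ℂ} (hξ : ‖ξ‖ = 1) :
    circlePoissonKernel z ξ = poissonKernel 0 z ξ := by
  have h : ‖1 - (starRingEnd ℂ) ξ * z‖ = ‖ξ - z‖ := by
    rw [← one_mul ‖1 - _‖, ← hξ, ← norm_mul, mul_sub, mul_one, ← mul_assoc, Complex.mul_conj,
      Complex.normSq_eq_norm_sq, hξ]
    simp
  rw [circlePoissonKernel, poissonKernel_def, h]
  simp [hξ]

lemma circlePoissonKernel_nonneg {z : ℂ} (hz : ‖z‖ < 1) (ξ : ℂ) :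
    0 ≤ circlePoissonKernel z ξ := by
  have := norm_nonneg z
  exact div_nonneg (by nlinarith) (sq_nonneg _)

@[fun_prop]
lemma measurable_circlePoissonKernel (z : ℂ) : Measurable (circlePoissonKernel z) := by
  unfold circlePoissonKernel
  fun_prop

lemma integral_circleMeasure {E : Type*} [NormedAddCommGroup E] [NormedSpace ℝ E] {g : ℂ → E}
    (hg : StronglyMeasurable g) :
    ∫ ξ, g ξ ∂circleMeasure = circleAverage g 0 1 := by
  rw [circleMeasure, integral_smul_measure, integral_map (by fun_prop) hg.aestronglyMeasurable,
    circleAverage_def, intervalIntegral.integral_of_le two_pi_pos.le, ENNReal.toReal_inv,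
    ENNReal.toReal_ofReal two_pi_pos.le]
  congr 2 with θ
  simp [circleMap]

lemma integral_mul_circlePoissonKernel (z : ℂ) {g : ℂ → ℝ} (hg : Measurable g) :
    ∫ ξ, g ξ * circlePoissonKernel z ξ ∂circleMeasure
      = circleAverage (fun ξ ↦ poissonKernel 0 z ξ * g ξ) 0 1 := by
  rw [integral_circleMeasure (by fun_prop)]
  refine circleAverage_congr_sphere fun ξ hξ ↦ ?_
  rw [circlePoissonKernel_eq_poissonKernel z (by simpa using hξ), mul_comm]

end UnitCircle

section ZeroFreePolynomial

variable {p : Polynomial ℂ} {lam : ℂ}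

lemma integral_norm_div_sub_one_sq_mul_circlePoissonKernel
    (hfree : ∀ z : ℂ, ‖z‖ ≤ 1 → p.eval z ≠ 0) (hlam : ‖lam‖ < 1) :
    ∫ ξ, ‖p.eval lam / p.eval ξ - 1‖ ^ 2 * circlePoissonKernel lam ξ ∂circleMeasure
      = circleAverage (fun ξ ↦ poissonKernel 0 lam ξ * ‖p.eval lam / p.eval ξ‖ ^ 2) 0 1 - 1 := by
  have hA : DiffContOnCl ℂ (fun ξ ↦ p.eval lam / p.eval ξ) (ball 0 1) := by
    refine DifferentiableOn.diffContOnCl ?_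
    rw [closure_ball 0 one_ne_zero]
    exact (differentiableOn_const _).div p.differentiable.differentiableOn
      fun z hz ↦ hfree z (mem_closedBall_zero_iff.1 hz)
  have h := circleAverage_poissonKernel_mul_norm_sub_sq hA (mem_ball_zero_iff.2 hlam)
  rw [div_self (hfree lam hlam.le), norm_one, one_pow] at h
  rw [integral_mul_circlePoissonKernel lam (by fun_prop), h]

lemma circleAverage_poissonKernel_mul_norm_div_sq :
    circleAverage (fun ξ ↦ poissonKernel 0 lam ξ * ‖p.eval lam / p.eval ξ‖ ^ 2) 0 1
      = ‖p.eval lam‖ ^ 2 * ∫ ξ, circlePoissonKernel lam ξ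
          ∂(circleMeasure.withDensity fun ξ => ENNReal.ofReal (1 / ‖p.eval ξ‖ ^ 2)) := by
  rw [integral_withDensity_ofReal (by fun_prop) (fun _ ↦ by positivity), ← smul_eq_mul,
    ← integral_smul, integral_circleMeasure (by fun_prop)]
  refine circleAverage_congr_sphere fun ξ hξ ↦ ?_
  rw [circlePoissonKernel_eq_poissonKernel lam (by simpa using hξ), norm_div, div_pow]
  simp only [smul_eq_mul]
  ring

lemma integral_log_inv_norm_sq_mul_circlePoissonKernel
    (hfree : ∀ z : ℂ, ‖z‖ ≤ 1 → p.eval z ≠ 0) (hlam : ‖lam‖ < 1) :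
    ∫ ξ, Real.log ((‖p.eval ξ‖ ^ 2)⁻¹) * circlePoissonKernel lam ξ ∂circleMeasure
      = -2 * Real.log ‖p.eval lam‖ := by
  rw [integral_mul_circlePoissonKernel lam (by fun_prop),
    ← circleAverage_poissonKernel_mul_log_norm
      (fun z _ ↦ AnalyticOnNhd.eval_polynomial p z trivial)
      (fun z hz ↦ hfree z (mem_closedBall_zero_iff.1 hz)) (mem_ball_zero_iff.2 hlam),
    ← smul_eq_mul, ← circleAverage_fun_smul]
  congr 1 with ξ
  rw [Real.log_inv, Real.log_pow, smul_eq_mul]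
  push_cast
  ring

end ZeroFreePolynomial

theorem entropy_identity_for_bernstein_szego_general (p : Polynomial ℂ)
    (hfree : ∀ z : ℂ, ‖z‖ ≤ 1 → p.eval z ≠ 0)
    (lam : ℂ) (hlam : ‖lam‖ < 1) :
    ∫ ξ, ‖p.eval lam / p.eval ξ - 1‖ ^ 2 * circlePoissonKernel lam ξ ∂circleMeasure
      = Real.exp
          (Real.log (∫ ξ, circlePoissonKernel lam ξ
              ∂(circleMeasure.withDensity fun ξ => ENNReal.ofReal (1 / ‖p.eval ξ‖ ^ 2)))
            - ∫ ξ, Real.log ((‖p.eval ξ‖ ^ 2)⁻¹) * circlePoissonKernel lam ξ ∂circleMeasure)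
        - 1 := by
  set X := ∫ ξ, circlePoissonKernel lam ξ
    ∂(circleMeasure.withDensity fun ξ => ENNReal.ofReal (1 / ‖p.eval ξ‖ ^ 2))
  have hpoisson := integral_norm_div_sub_one_sq_mul_circlePoissonKernel hfree hlam
  rw [circleAverage_poissonKernel_mul_norm_div_sq] at hpoisson
  have hplam : 0 < ‖p.eval lam‖ ^ 2 := by have := hfree lam hlam.le; positivity
  have hX : 0 < X := by
    have : 0 ≤ ∫ ξ, ‖p.eval lam / p.eval ξ - 1‖ ^ 2 * circlePoissonKernel lam ξ ∂circleMeasure :=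
      integral_nonneg fun ξ ↦ mul_nonneg (sq_nonneg _) (circlePoissonKernel_nonneg hlam ξ)
    exact pos_of_mul_pos_right (by linarith) hplam.le
  have hexponent :
      Real.log X - -2 * Real.log ‖p.eval lam‖ = Real.log (‖p.eval lam‖ ^ 2 * X) := by
    rw [Real.log_mul hplam.ne' hX.ne', Real.log_pow]
    push_cast
    ring
  rw [hpoisson, integral_log_inv_norm_sq_mul_circlePoissonKernel hfree hlam, hexponent,
    Real.exp_log (by positivity)]

/-- Lemma 2.3: for a zero-free polynomial `p` with `ν = |p|⁻² dm` a probability measure,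
`∫ |p(λ)/p(ξ) - 1|² P_λ dm = exp(K_ν(λ)) - 1`. -/
theorem entropy_identity_for_bernstein_szego (n : ℕ) (p : Polynomial ℂ)
    (hdeg : p.natDegree = n) (hfree : ∀ z : ℂ, ‖z‖ ≤ 1 → p.eval z ≠ 0)
    (lam : ℂ) (hlam : ‖lam‖ < 1)
    (hprob : IsProbabilityMeasure
      (circleMeasure.withDensity fun ξ => ENNReal.ofReal (1 / ‖p.eval ξ‖ ^ 2))) :
    ∫ ξ, ‖p.eval lam / p.eval ξ - 1‖ ^ 2 * circlePoissonKernel lam ξ ∂circleMeasure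
      = Real.exp
          (Real.log (∫ ξ, circlePoissonKernel lam ξ
              ∂(circleMeasure.withDensity fun ξ => ENNReal.ofReal (1 / ‖p.eval ξ‖ ^ 2)))
            - ∫ ξ, Real.log ((‖p.eval ξ‖ ^ 2)⁻¹) * circlePoissonKernel lam ξ ∂circleMeasure)
        - 1 :=
  entropy_identity_for_bernstein_szego_general p hfree lam hlam
end

section
/- Let μ be a probability measure on the unit circle whose support is an infinite set, with orthonormal polynomials φ_k and reproducing kernels k_{μ,n}(z_1,z_2) = Σ_{k=0}^{n-1} conj(φ_k(z_2)) φ_k(z_1). Suppose q is a polynomial of degree n and q̃ a polynomial of degree at most n such that |q̃(z)|² - |q(z)|² = (1-|z|²) k_{μ,n}(z,z) for all z ∈ C. Then q̃ has no zeros in the closed unit disk D ∪ T. -/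
/-!
For `|z| < 1` the identity gives `|q̃(z)|² ≥ (1 - |z|²) k(z, z) > 0`. At a zero `z₀` of `q̃`
on the unit circle, write `q̃ = (X - z₀) p`; along the radius `t ↦ t z₀` the inequality
`(1 - t²) k ≤ |q̃|² = (1 - t)² |p|²` becomes `(1 + t) k(t z₀) ≤ (1 - t) |p(t z₀)|²`, and letting
`t → 1` gives `2 k(z₀, z₀) ≤ 0`, which is impossible since `k(z₀, z₀) ≥ |φ₀|² > 0`.
-/

open MeasureTheory Polynomial

namespace Polynomial

theorem eval_ne_zero_of_natDegree_eq_zero {R : Type*} [Semiring R] {p : R[X]} (hp : p ≠ 0)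
    (hdeg : p.natDegree = 0) (x : R) : p.eval x ≠ 0 := by
  rw [eq_C_of_natDegree_eq_zero hdeg] at hp ⊢
  simpa using hp

theorem eval_ne_zero_of_norm_eq_one {P : ℂ[X]} {K : ℂ → ℝ} (hK : Continuous K)
    (hP : ∀ w, (1 - ‖w‖ ^ 2) * K w ≤ ‖P.eval w‖ ^ 2) {z : ℂ} (hz : ‖z‖ = 1) (hKz : 0 < K z) :
    P.eval z ≠ 0 := by
  intro hroot
  obtain ⟨P₁, hP₁⟩ := dvd_iff_isRoot.mpr hroot
  have hradial : ∀ t : ℝ, t < 1 →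
      (1 + t) * K (t * z) ≤ (1 - t) * ‖P₁.eval (t * z)‖ ^ 2 := by
    intro t ht
    have hdist : ‖(t : ℂ) * z - z‖ = 1 - t := by
      rw [← sub_one_mul, norm_mul, hz, mul_one, ← Complex.ofReal_one, ← Complex.ofReal_sub,
        Complex.norm_real, Real.norm_of_nonpos (by linarith)]
      ring
    have h := hP (t * z)
    rw [hP₁, eval_mul, eval_sub, eval_X, eval_C, norm_mul (_ - _), hdist, norm_mul, hz,
      Complex.norm_real, Real.norm_eq_abs, mul_one, sq_abs] at h
    have hpos : 0 < 1 - t := by linarith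
    nlinarith
  have hclosed : IsClosed {t : ℝ | (1 + t) * K (t * z) ≤ (1 - t) * ‖P₁.eval (t * z)‖ ^ 2} :=
    isClosed_le (by fun_prop) (by fun_prop)
  have hlim : (1 : ℝ) ∈ {t : ℝ | (1 + t) * K (t * z) ≤ (1 - t) * ‖P₁.eval (t * z)‖ ^ 2} :=
    hclosed.closure_subset_iff.mpr (fun t (ht : t ∈ Set.Iio 1) ↦ hradial t ht)
      (by rw [closure_Iio]; exact Set.mem_Iic.mpr le_rfl)
  simp only [Set.mem_ofPred_eq, Complex.ofReal_one, one_mul, sub_self, zero_mul] at hlim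
  linarith

theorem eval_ne_zero_of_one_sub_norm_sq_mul_le {P : ℂ[X]} {K : ℂ → ℝ} (hK : Continuous K)
    (hP : ∀ w, (1 - ‖w‖ ^ 2) * K w ≤ ‖P.eval w‖ ^ 2) {z : ℂ} (hz : ‖z‖ ≤ 1) (hKz : 0 < K z) :
    P.eval z ≠ 0 := by
  rcases hz.lt_or_eq with hz | hz
  · intro hroot
    have h := hP z
    rw [hroot, norm_zero] at h
    have : 0 < 1 - ‖z‖ ^ 2 := by nlinarith [norm_nonneg z]
    nlinarith
  · exact eval_ne_zero_of_norm_eq_one hK hP hz hKz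

end Polynomial

theorem reflected_polynomial_zero_free_general (μ : Measure ℂ)
    (φ : ℕ → Polynomial ℂ) (hdeg : ∀ k, (φ k).natDegree = k)
    (horth : ∀ j k, ∫ ξ, (φ j).eval ξ * (starRingEnd ℂ) ((φ k).eval ξ) ∂μ
      = if j = k then 1 else 0)
    (n : ℕ) (q qt : Polynomial ℂ) (hq : q.natDegree = n) (hq0 : q ≠ 0)
    (hid : ∀ z : ℂ, ‖qt.eval z‖ ^ 2 - ‖q.eval z‖ ^ 2
      = (1 - ‖z‖ ^ 2) * ∑ k ∈ Finset.range n, ‖(φ k).eval z‖ ^ 2) :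
    ∀ z : ℂ, ‖z‖ ≤ 1 → qt.eval z ≠ 0 := by
  intro z hz
  rcases Nat.eq_zero_or_pos n with rfl | hn
  · have hqz := eval_ne_zero_of_natDegree_eq_zero hq0 hq z
    have h := hid z
    rw [Finset.sum_range_zero, mul_zero, sub_eq_zero] at h
    intro hroot
    rw [hroot, norm_zero, eq_comm] at h
    exact hqz (by simpa using h)
  · have hφ₀ : φ 0 ≠ 0 := fun h ↦ by simpa [h] using horth 0 0
    have hK : 0 < ∑ k ∈ Finset.range n, ‖(φ k).eval z‖ ^ 2 :=
      Finset.sum_pos' (fun _ _ ↦ by positivity) ⟨0, Finset.mem_range.mpr hn,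
        pow_pos (norm_pos_iff.mpr (eval_ne_zero_of_natDegree_eq_zero hφ₀ (hdeg 0) z)) 2⟩
    refine eval_ne_zero_of_one_sub_norm_sq_mul_le
      (K := fun w ↦ ∑ k ∈ Finset.range n, ‖(φ k).eval w‖ ^ 2) (by fun_prop) (fun w ↦ ?_) hz hK
    linarith [hid w, sq_nonneg ‖q.eval w‖]

/-- Lemma 2.2 step: if `|q̃(z)|² - |q(z)|² = (1-|z|²) k_{μ,n}(z,z)` where
`k_{μ,n}(z,z) = Σ_{k<n} |φ_k(z)|²` for the orthonormal polynomials `φ_k` of a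
probability measure `μ` on the unit circle with infinite support, then `q̃`
has no zeros in the closed unit disk. -/
theorem reflected_polynomial_zero_free (μ : Measure ℂ) [IsProbabilityMeasure μ]
    (hcirc : μ {z : ℂ | ‖z‖ ≠ 1} = 0)
    (hsupp : {x : ℂ | ∀ ε > 0, 0 < μ (Metric.ball x ε)}.Infinite)
    (φ : ℕ → Polynomial ℂ) (hdeg : ∀ k, (φ k).natDegree = k)
    (horth : ∀ j k, ∫ ξ, (φ j).eval ξ * (starRingEnd ℂ) ((φ k).eval ξ) ∂μ
      = if j = k then 1 else 0)
    (n : ℕ) (q qt : Polynomial ℂ) (hq : q.natDegree = n) (hq0 : q ≠ 0)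
    (hqt : qt.natDegree ≤ n)
    (hid : ∀ z : ℂ, ‖qt.eval z‖ ^ 2 - ‖q.eval z‖ ^ 2
      = (1 - ‖z‖ ^ 2) * ∑ k ∈ Finset.range n, ‖(φ k).eval z‖ ^ 2) :
    ∀ z : ℂ, ‖z‖ ≤ 1 → qt.eval z ≠ 0 :=
  reflected_polynomial_zero_free_general μ φ hdeg horth n q qt hq hq0 hid
end
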